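/- arXiv:1204.0711 — 4 statements merged into one kernel-verified Lean document; each statement's English description precedes it below -/
import Mathlib

section
/- Let p, q be strictly positive probability distributions on a finite set X with q not a constant multiple of p, and define ψ(t) = log ∑_x p(x)^t q(x)^{1−t} and the Hoeffding distance H_r(p‖q) = sup_{0≤t<1} (−tr − ψ(t))/(1−t). Then for every r with −ψ(1) < r < −ψ(0) − ψ'(0) there exists a unique t_r ∈ (0,1) such that r = (t_r − 1)ψ'(t_r) − ψ(t_r) and H_r(p‖q) = t_r ψ'(t_r) − ψ(t_r). -/
/-!
With `a = log (p / q)` one has `ψ t = log ∑ₓ q x * exp (t * a x)`, whose second derivative is the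
variance of the non-constant `a` under the tilted weights `q x * exp (t * a x)`; so `ψ` is strictly
convex. For a strictly convex `C¹` function, `r(t) = (t - 1) ψ'(t) - ψ(t)` is strictly decreasing
on `t < 1` (tangent line inequality plus monotonicity of `ψ'`), so the intermediate value theorem
produces a unique `t_r ∈ (0, 1)` with `r(t_r) = r`. The tangent line of `ψ` at `t_r` then shows
that `t_r` maximises `(-t r - ψ t) / (1 - t)`, with value `t_r ψ'(t_r) - ψ(t_r)`.
-/

open Set Real

namespace ConvexOn

variable {S : Set ℝ} {f : ℝ → ℝ} {x y : ℝ}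

lemma add_deriv_mul_sub_le (hf : ConvexOn ℝ S f) (hx : x ∈ S) (hy : y ∈ S)
    (hd : DifferentiableAt ℝ f x) : f x + deriv f x * (y - x) ≤ f y := by
  rcases lt_trichotomy x y with hxy | rfl | hxy
  · have h := hf.deriv_le_slope hx hy hxy hd
    rw [slope_def_field, le_div_iff₀ (sub_pos.2 hxy)] at h
    linarith
  · simp
  · have h := hf.slope_le_deriv hy hx hxy hd
    rw [slope_def_field, div_le_iff₀ (sub_pos.2 hxy)] at h
    linarith

end ConvexOn

-- `r = hoeffdingRate ψ t` is the first-order condition for `t` to maximise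
-- `(-t * r - ψ t) / (1 - t)`.
noncomputable def hoeffdingRate (ψ : ℝ → ℝ) (t : ℝ) : ℝ := (t - 1) * deriv ψ t - ψ t

section Hoeffding

variable {ψ : ℝ → ℝ}

lemma strictAntiOn_hoeffdingRate (hconv : StrictConvexOn ℝ univ ψ) (hd : Differentiable ℝ ψ) :
    StrictAntiOn (hoeffdingRate ψ) (Iio 1) := by
  intro s _ t ht hst
  have htan := hconv.convexOn.add_deriv_mul_sub_le (mem_univ s) (mem_univ t) (hd s)
  have hmono := hconv.strictMonoOn_deriv (fun x _ => hd x) (mem_univ s) (mem_univ t) hst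
  have : 0 < (1 - t) * (deriv ψ t - deriv ψ s) := mul_pos (sub_pos.2 ht) (sub_pos.2 hmono)
  simp only [hoeffdingRate]
  nlinarith

lemma isGreatest_hoeffding (hconv : ConvexOn ℝ univ ψ) (hd : Differentiable ℝ ψ) {s : ℝ}
    (hs : s ∈ Ico 0 1) :
    IsGreatest {y | ∃ t ∈ Ico (0 : ℝ) 1, y = (-t * hoeffdingRate ψ s - ψ t) / (1 - t)}
      (s * deriv ψ s - ψ s) := by
  refine ⟨⟨s, hs, ?_⟩, ?_⟩
  · have : 1 - s ≠ 0 := (sub_pos.2 hs.2).ne'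
    field_simp
    simp only [hoeffdingRate]
    ring
  · rintro y ⟨t, ht, rfl⟩
    have htan := hconv.add_deriv_mul_sub_le (mem_univ s) (mem_univ t) (hd s)
    rw [div_le_iff₀ (sub_pos.2 ht.2), hoeffdingRate]
    nlinarith

theorem existsUnique_hoeffdingRate_eq (hconv : StrictConvexOn ℝ univ ψ)
    (hd : Differentiable ℝ ψ) (hd' : Continuous (deriv ψ)) {r : ℝ} (hr1 : -ψ 1 < r)
    (hr2 : r < -ψ 0 - deriv ψ 0) :
    ∃! t, t ∈ Ioo (0 : ℝ) 1 ∧ r = hoeffdingRate ψ t ∧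
      sSup {y | ∃ t ∈ Ico (0 : ℝ) 1, y = (-t * r - ψ t) / (1 - t)} = t * deriv ψ t - ψ t := by
  have hcont : Continuous (hoeffdingRate ψ) := by
    have := hd.continuous
    unfold hoeffdingRate
    fun_prop
  obtain ⟨t, ht, rfl⟩ : r ∈ hoeffdingRate ψ '' Ioo 0 1 :=
    intermediate_value_Ioo' zero_le_one hcont.continuousOn
      ⟨by simpa [hoeffdingRate] using hr1, by simp only [hoeffdingRate]; linarith⟩
  refine ⟨t, ⟨ht, rfl, ?_⟩, ?_⟩
  · exact (isGreatest_hoeffding hconv.convexOn hd (Ioo_subset_Ico_self ht)).csSup_eq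
  · rintro u ⟨hu, heq, -⟩
    exact (strictAntiOn_hoeffdingRate hconv hd).injOn hu.2 ht.2 heq.symm

end Hoeffding

section ExpSum

variable {ι : Type*} [Fintype ι]

lemma sq_sum_mul_lt_sum_mul_sum_mul_sq {v a : ι → ℝ} (hv : ∀ i, 0 < v i)
    (ha : ∃ i j, a i ≠ a j) :
    (∑ i, v i * a i) ^ 2 < (∑ i, v i) * ∑ i, v i * a i ^ 2 := by
  have lagrange : ∑ i, ∑ j, v i * v j * (a i - a j) ^ 2
      = 2 * ((∑ i, v i) * ∑ i, v i * a i ^ 2 - (∑ i, v i * a i) ^ 2) := by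
    calc ∑ i, ∑ j, v i * v j * (a i - a j) ^ 2
        = ∑ i, (v i * a i ^ 2 * ∑ j, v j + v i * ∑ j, v j * a j ^ 2
            - 2 * (v i * a i) * ∑ j, v j * a j) := by
          refine Finset.sum_congr rfl fun i _ => ?_
          simp only [Finset.mul_sum, ← Finset.sum_add_distrib, ← Finset.sum_sub_distrib]
          exact Finset.sum_congr rfl fun j _ => by ring
      _ = _ := by
          simp only [Finset.sum_add_distrib, Finset.sum_sub_distrib, ← Finset.sum_mul,
            ← Finset.mul_sum]
          ring
  obtain ⟨i, j, hij⟩ := ha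
  have hpos : 0 < ∑ i, ∑ j, v i * v j * (a i - a j) ^ 2 := by
    have hnonneg : ∀ i j, 0 ≤ v i * v j * (a i - a j) ^ 2 := fun i j => by
      have := hv i; have := hv j; positivity
    refine Finset.sum_pos' (fun i _ => Finset.sum_nonneg fun j _ => hnonneg i j)
      ⟨i, Finset.mem_univ _, Finset.sum_pos' (fun j _ => hnonneg i j) ⟨j, Finset.mem_univ _, ?_⟩⟩
    have := hv i; have := hv j; have := sub_ne_zero.2 hij
    positivity
  linarith

noncomputable def expSum (w a : ι → ℝ) (t : ℝ) : ℝ := ∑ i, w i * exp (t * a i)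

lemma hasDerivAt_expSum (w a : ι → ℝ) (t : ℝ) :
    HasDerivAt (expSum w a) (expSum (fun i => w i * a i) a t) t :=
  HasDerivAt.fun_sum fun i _ =>
    ((hasDerivAt_mul_const (a i)).exp.const_mul (w i)).congr_deriv (by ring)

variable {w : ι → ℝ} (a : ι → ℝ)

lemma expSum_pos [Nonempty ι] (hw : ∀ i, 0 < w i) (t : ℝ) : 0 < expSum w a t :=
  Finset.sum_pos (fun i _ => mul_pos (hw i) (exp_pos _)) Finset.univ_nonempty

lemma hasDerivAt_log_expSum [Nonempty ι] (hw : ∀ i, 0 < w i) (t : ℝ) :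
    HasDerivAt (fun t => log (expSum w a t))
      (expSum (fun i => w i * a i) a t / expSum w a t) t :=
  (hasDerivAt_expSum w a t).log (expSum_pos a hw t).ne'

lemma deriv_log_expSum [Nonempty ι] (hw : ∀ i, 0 < w i) :
    deriv (fun t => log (expSum w a t)) =
      fun t => expSum (fun i => w i * a i) a t / expSum w a t :=
  funext fun t => (hasDerivAt_log_expSum a hw t).deriv

lemma continuous_deriv_log_expSum [Nonempty ι] (hw : ∀ i, 0 < w i) :
    Continuous (deriv (fun t => log (expSum w a t))) := by
  rw [deriv_log_expSum a hw]
  exact continuous_iff_continuousAt.2 fun t =>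
    ((hasDerivAt_expSum _ a t).continuousAt.div (hasDerivAt_expSum w a t).continuousAt
      (expSum_pos a hw t).ne')

lemma strictConvexOn_log_expSum (hw : ∀ i, 0 < w i) (ha : ∃ i j, a i ≠ a j) :
    StrictConvexOn ℝ univ (fun t => log (expSum w a t)) := by
  have : Nonempty ι := ⟨ha.choose⟩
  refine StrictMono.strictConvexOn_univ_of_deriv
    (continuous_iff_continuousAt.2 fun t => (hasDerivAt_log_expSum a hw t).continuousAt) ?_
  rw [deriv_log_expSum a hw]
  refine strictMono_of_hasDerivAt_pos (fun t => (hasDerivAt_expSum _ a t).div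
    (hasDerivAt_expSum w a t) (expSum_pos a hw t).ne') fun t => div_pos ?_ (by
      have := expSum_pos a hw t; positivity)
  have h := sq_sum_mul_lt_sum_mul_sum_mul_sq (v := fun i => w i * exp (t * a i))
    (fun i => mul_pos (hw i) (exp_pos _)) ha
  have hZ1 : expSum (fun i => w i * a i) a t = ∑ i, w i * exp (t * a i) * a i :=
    Finset.sum_congr rfl fun i _ => by ring
  have hZ2 : expSum (fun i => w i * a i * a i) a t = ∑ i, w i * exp (t * a i) * a i ^ 2 :=
    Finset.sum_congr rfl fun i _ => by ring
  rw [hZ1, hZ2, expSum]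
  linarith

end ExpSum

lemma rpow_mul_rpow_one_sub {x y : ℝ} (hx : 0 < x) (hy : 0 < y) (t : ℝ) :
    x ^ t * y ^ (1 - t) = y * exp (t * log (x / y)) := by
  rw [rpow_def_of_pos hx, rpow_def_of_pos hy, log_div hx.ne' hy.ne', ← exp_add,
    mul_comm y, ← exp_log hy, ← exp_add, log_exp]
  ring_nf

lemma exists_log_div_ne {X : Type*} {p q : X → ℝ} (hp : ∀ x, 0 < p x) (hq : ∀ x, 0 < q x)
    (h : ¬ ∃ c : ℝ, ∀ x, q x = c * p x) : ∃ x y, log (p x / q x) ≠ log (p y / q y) := by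
  contrapose! h
  rcases isEmpty_or_nonempty X with hX | hX
  · exact ⟨0, isEmptyElim⟩
  obtain ⟨x₀⟩ := hX
  refine ⟨q x₀ / p x₀, fun x => ?_⟩
  have hdiv := log_injOn_pos (div_pos (hp x) (hq x)) (div_pos (hp x₀) (hq x₀)) (h x x₀)
  have := hp x; have := hq x; have := hp x₀; have := hq x₀
  field_simp at hdiv ⊢
  linarith

theorem stmt_10_general {X : Type*} [Fintype X] (p q : X → ℝ)
    (hp : ∀ x, 0 < p x) (hq : ∀ x, 0 < q x)
    (hnprop : ¬ ∃ c : ℝ, ∀ x, q x = c * p x)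
    (ψ : ℝ → ℝ) (hψ : ψ = fun t => Real.log (∑ x, p x ^ t * q x ^ (1 - t)))
    (H : ℝ → ℝ)
    (hH : H = fun r => sSup {y : ℝ | ∃ t ∈ Set.Ico (0:ℝ) 1, y = (-t * r - ψ t) / (1 - t)})
    (r : ℝ) (hr1 : -ψ 1 < r) (hr2 : r < -ψ 0 - deriv ψ 0) :
    ∃! tr : ℝ, tr ∈ Set.Ioo (0:ℝ) 1 ∧
      r = (tr - 1) * deriv ψ tr - ψ tr ∧
      H r = tr * deriv ψ tr - ψ tr := by
  set a : X → ℝ := fun x => log (p x / q x)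
  have ha : ∃ x y, a x ≠ a y := exists_log_div_ne hp hq hnprop
  have : Nonempty X := ⟨ha.choose⟩
  have hψa : ψ = fun t => log (expSum q a t) := by
    rw [hψ]
    simp only [expSum, a, rpow_mul_rpow_one_sub (hp _) (hq _)]
  subst hψa hH
  exact existsUnique_hoeffdingRate_eq (strictConvexOn_log_expSum a hq ha)
    (fun t => (hasDerivAt_log_expSum a hq t).differentiableAt)
    (continuous_deriv_log_expSum a hq) hr1 hr2

/-- Hoeffding representation: for strictly positive probability distributions `p, q` on a
finite set, with `q` not a constant multiple of `p`, and
`ψ(t) = log ∑ₓ p(x)^t q(x)^(1-t)`,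
`H_r = sup_{0≤t<1} (-tr - ψ(t))/(1-t)`, for every `r` with `-ψ(1) < r < -ψ(0) - ψ'(0)`
there is a unique `t_r ∈ (0,1)` with `r = (t_r-1)ψ'(t_r) - ψ(t_r)` and
`H_r = t_r ψ'(t_r) - ψ(t_r)`. -/
theorem stmt_10 {X : Type*} [Fintype X] [Nonempty X] (p q : X → ℝ)
    (hp : ∀ x, 0 < p x) (hq : ∀ x, 0 < q x)
    (hp1 : ∑ x, p x = 1) (hq1 : ∑ x, q x = 1)
    (hnprop : ¬ ∃ c : ℝ, ∀ x, q x = c * p x)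
    (ψ : ℝ → ℝ) (hψ : ψ = fun t => Real.log (∑ x, p x ^ t * q x ^ (1 - t)))
    (H : ℝ → ℝ)
    (hH : H = fun r => sSup {y : ℝ | ∃ t ∈ Set.Ico (0:ℝ) 1, y = (-t * r - ψ t) / (1 - t)})
    (r : ℝ) (hr1 : -ψ 1 < r) (hr2 : r < -ψ 0 - deriv ψ 0) :
    ∃! tr : ℝ, tr ∈ Set.Ioo (0:ℝ) 1 ∧
      r = (tr - 1) * deriv ψ tr - ψ tr ∧
      H r = tr * deriv ψ tr - ψ tr :=
  stmt_10_general p q hp hq hnprop ψ hψ H hH r hr1 hr2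
end

section
/- Let p be a probability distribution on a finite set X with supp p ⊆ supp q for a positive measure q. Then lim_{r↘0} H_r(p‖q) = H_0(p‖q) = D(p‖q), where H_r(p‖q) = sup_{0≤t<1} (−tr − log ∑_x p(x)^t q(x)^{1−t})/(1−t) and D(p‖q) = ∑_x p(x) log(p(x)/q(x)). -/
open Filter Topology

/-!
Write `ψ(t) = log ∑ p^t q^(1-t)` and `D = D(p‖q)`. Then `ψ(1) = 0` and `ψ'(1) = D`, and Jensen's
inequality for `log` gives the tangent bound `ψ(t) ≥ (t - 1) D`. The tangent bound makes every
quantity `(-t r - ψ(t)) / (1 - t)` with `r ≥ 0` at most `D`, so `H_r ≤ D`, while at `r = 0` these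
quantities are difference quotients of `ψ` at `1` and tend to `D` as `t ↗ 1`; hence `H_0 = D`.
Finally `H` is a supremum of functions continuous in `r`, so it is lower semicontinuous, which
together with `H_r ≤ H_0` gives continuity from the right at `0`.
-/

noncomputable def hoeffding (ψ : ℝ → ℝ) (r : ℝ) : ℝ :=
  sSup {y : ℝ | ∃ t ∈ Set.Ico (0:ℝ) 1, y = (-t * r - ψ t) / (1 - t)}

lemma hoeffding_set_nonempty (ψ : ℝ → ℝ) (r : ℝ) :
    {y : ℝ | ∃ t ∈ Set.Ico (0:ℝ) 1, y = (-t * r - ψ t) / (1 - t)}.Nonempty :=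
  ⟨_, 0, ⟨le_rfl, zero_lt_one⟩, rfl⟩

section TangentBound

variable {ψ : ℝ → ℝ} {D r : ℝ} (htangent : ∀ t, (t - 1) * D ≤ ψ t)
include htangent

lemma neg_mul_sub_div_one_sub_le (hr : 0 ≤ r) {t : ℝ} (ht : t ∈ Set.Ico (0:ℝ) 1) :
    (-t * r - ψ t) / (1 - t) ≤ D := by
  rw [div_le_iff₀ (sub_pos.mpr ht.2)]
  nlinarith [htangent t, mul_nonneg ht.1 hr]

lemma le_hoeffding (hr : 0 ≤ r) {t : ℝ} (ht : t ∈ Set.Ico (0:ℝ) 1) :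
    (-t * r - ψ t) / (1 - t) ≤ hoeffding ψ r :=
  le_csSup ⟨D, by rintro _ ⟨s, hs, rfl⟩; exact neg_mul_sub_div_one_sub_le htangent hr hs⟩
    ⟨t, ht, rfl⟩

lemma hoeffding_le (hr : 0 ≤ r) : hoeffding ψ r ≤ D :=
  csSup_le (hoeffding_set_nonempty ψ r) fun _ ⟨_, ht, hy⟩ =>
    hy ▸ neg_mul_sub_div_one_sub_le htangent hr ht

lemma hoeffding_zero (hψ1 : ψ 1 = 0) (hderiv : HasDerivAt ψ D 1) : hoeffding ψ 0 = D := by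
  have hslope : Tendsto (fun t => -ψ t / (1 - t)) (𝓝[<] 1) (𝓝 D) :=
    (hasDerivAt_iff_tendsto_slope_left_right.mp hderiv).1.congr fun t => by
      rw [slope_def_field, hψ1, sub_zero, ← neg_div_neg_eq, neg_sub]
  refine le_antisymm (hoeffding_le htangent le_rfl) (le_of_tendsto hslope ?_)
  filter_upwards [Ioo_mem_nhdsLT_of_mem (Set.mem_Ioc.mpr ⟨zero_lt_one, le_rfl⟩)] with t ht
  simpa using le_hoeffding htangent le_rfl ⟨ht.1.le, ht.2⟩

lemma tendsto_hoeffding_nhdsGT_zero (h0 : hoeffding ψ 0 = D) :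
    Tendsto (hoeffding ψ) (𝓝[>] 0) (𝓝 D) := by
  rw [tendsto_order]
  refine ⟨fun a ha => ?_, fun b hb => ?_⟩
  · obtain ⟨_, ⟨t, ht, rfl⟩, hat⟩ := exists_lt_of_lt_csSup (hoeffding_set_nonempty ψ 0) (h0 ▸ ha)
    have hcont : Continuous fun r => (-t * r - ψ t) / (1 - t) := by fun_prop
    filter_upwards [self_mem_nhdsWithin,
      nhdsWithin_le_nhds ((hcont.tendsto 0).eventually (eventually_gt_nhds hat))] with r hr har
    exact har.trans_le (le_hoeffding htangent (le_of_lt hr) ht)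
  · filter_upwards [self_mem_nhdsWithin] with r hr
    exact (hoeffding_le htangent (le_of_lt hr)).trans_lt hb

end TangentBound

section FiniteSum

variable {X : Type*} {S : Finset X} {p q : X → ℝ}

lemma rpow_mul_rpow_one_sub_eq_mul_div_rpow {a b : ℝ} (ha : 0 < a) (hb : 0 < b) (t : ℝ) :
    a ^ t * b ^ (1 - t) = a * (b / a) ^ (1 - t) := by
  rw [Real.div_rpow hb.le ha.le, Real.rpow_sub ha, Real.rpow_one]
  field_simp

lemma sub_one_mul_sum_mul_log_div_le_log_sum (hp : ∀ x ∈ S, 0 < p x) (hq : ∀ x ∈ S, 0 < q x)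
    (hp1 : ∑ x ∈ S, p x = 1) (t : ℝ) :
    (t - 1) * ∑ x ∈ S, p x * Real.log (p x / q x) ≤
      Real.log (∑ x ∈ S, p x ^ t * q x ^ (1 - t)) := by
  have hjensen := strictConcaveOn_log_Ioi.concaveOn.le_map_sum (t := S) (w := p)
    (p := fun x => (q x / p x) ^ (1 - t)) (fun x hx => (hp x hx).le) hp1
    (fun x hx => Real.rpow_pos_of_pos (div_pos (hq x hx) (hp x hx)) _)
  calc (t - 1) * ∑ x ∈ S, p x * Real.log (p x / q x)
      = ∑ x ∈ S, p x • Real.log ((q x / p x) ^ (1 - t)) := by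
        rw [Finset.mul_sum]
        refine Finset.sum_congr rfl fun x hx => ?_
        rw [smul_eq_mul, Real.log_rpow (div_pos (hq x hx) (hp x hx)),
          Real.log_div (hq x hx).ne' (hp x hx).ne', Real.log_div (hp x hx).ne' (hq x hx).ne']
        ring
    _ ≤ Real.log (∑ x ∈ S, p x • (q x / p x) ^ (1 - t)) := hjensen
    _ = Real.log (∑ x ∈ S, p x ^ t * q x ^ (1 - t)) := by
        congr 1
        exact Finset.sum_congr rfl fun x hx =>
          (rpow_mul_rpow_one_sub_eq_mul_div_rpow (hp x hx) (hq x hx) t).symm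

lemma hasDerivAt_sum_rpow_mul_rpow_one_sub (hp : ∀ x ∈ S, 0 < p x) (hq : ∀ x ∈ S, 0 < q x) :
    HasDerivAt (fun t : ℝ => ∑ x ∈ S, p x ^ t * q x ^ (1 - t))
      (∑ x ∈ S, p x * Real.log (p x / q x)) 1 := by
  refine HasDerivAt.fun_sum fun x hx => ?_
  have h := ((hasDerivAt_id' (1:ℝ)).const_rpow (hp x hx)).fun_mul
    (((hasDerivAt_const (1:ℝ) (1:ℝ)).fun_sub (hasDerivAt_id' 1)).const_rpow (hq x hx))
  refine h.congr_deriv ?_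
  simp only [Real.rpow_one, sub_self, Real.rpow_zero, Real.log_div (hp x hx).ne' (hq x hx).ne']
  ring

end FiniteSum

open Finset in
theorem stmt_12_general {X : Type*} [Fintype X] (p q : X → ℝ)
    (hp : ∀ x, 0 ≤ p x)
    (hp1 : ∑ x, p x = 1)
    (hsupp : ∀ x, 0 < p x → 0 < q x)
    (ψ : ℝ → ℝ)
    (hψ : ψ = fun t => Real.log (∑ x ∈ univ.filter (fun x => 0 < p x),
      p x ^ t * q x ^ (1 - t)))
    (H : ℝ → ℝ)
    (hH : H = fun r => sSup {y : ℝ | ∃ t ∈ Set.Ico (0:ℝ) 1, y = (-t * r - ψ t) / (1 - t)}) :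
    Filter.Tendsto H (nhdsWithin 0 (Set.Ioi 0)) (nhds (H 0)) ∧
    H 0 = ∑ x ∈ univ.filter (fun x => 0 < p x), p x * Real.log (p x / q x) := by
  set S := univ.filter (fun x => 0 < p x)
  have hpS : ∀ x ∈ S, 0 < p x := fun x hx => (mem_filter.mp hx).2
  have hqS : ∀ x ∈ S, 0 < q x := fun x hx => hsupp x (hpS x hx)
  have hS1 : ∑ x ∈ S, p x = 1 := hp1 ▸ sum_filter_of_ne fun x _ h => (hp x).lt_of_ne' h
  have hψ1 : ψ 1 = 0 := by simp [hψ, hS1]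
  have hderiv : HasDerivAt ψ (∑ x ∈ S, p x * Real.log (p x / q x)) 1 := by
    subst hψ
    simpa [hS1] using (hasDerivAt_sum_rpow_mul_rpow_one_sub hpS hqS).log (by simp [hS1])
  have htangent : ∀ t, (t - 1) * ∑ x ∈ S, p x * Real.log (p x / q x) ≤ ψ t :=
    hψ ▸ sub_one_mul_sum_mul_log_div_le_log_sum hpS hqS hS1
  obtain rfl : H = hoeffding ψ := hH
  have h0 := hoeffding_zero htangent hψ1 hderiv
  exact ⟨h0 ▸ tendsto_hoeffding_nhdsGT_zero htangent h0, h0⟩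

open Finset in
/-- For a probability measure `p` and a positive measure `q` on a finite set with
`supp p ⊆ supp q`, the Hoeffding distances satisfy `lim_{r↘0} H_r(p‖q) = H_0(p‖q) = D(p‖q)`. -/
theorem stmt_12 {X : Type*} [Fintype X] [DecidableEq X] (p q : X → ℝ)
    (hp : ∀ x, 0 ≤ p x) (hq : ∀ x, 0 ≤ q x)
    (hp1 : ∑ x, p x = 1)
    (hsupp : ∀ x, 0 < p x → 0 < q x)
    (ψ : ℝ → ℝ)
    (hψ : ψ = fun t => Real.log (∑ x ∈ univ.filter (fun x => 0 < p x),
      p x ^ t * q x ^ (1 - t)))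
    (H : ℝ → ℝ)
    (hH : H = fun r => sSup {y : ℝ | ∃ t ∈ Set.Ico (0:ℝ) 1, y = (-t * r - ψ t) / (1 - t)}) :
    Filter.Tendsto H (nhdsWithin 0 (Set.Ioi 0)) (nhds (H 0)) ∧
    H 0 = ∑ x ∈ univ.filter (fun x => 0 < p x), p x * Real.log (p x / q x) :=
  stmt_12_general p q hp hp1 hsupp ψ hψ H hH
end

section
/- Let ρ, σ be density operators on a finite-dimensional Hilbert space and ε ∈ (0,1). Then the optimal type II error β_ε = min{Tr σT : 0 ≤ T ≤ I, Tr ρ(I−T) ≤ ε} satisfies β_ε = sup_{λ≥0} { (1−ε)λ − Tr(λρ − σ)_+ } = sup_{λ≥0} { (λ+1)/2 − ½‖λρ − σ‖₁ − λε }, where (X)_+ denotes the positive part of a self-adjoint operator X. -/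
/-!
Write `F λ = Tr(λρ - σ)₊`. For every test `T`, `λ Tr ρT - Tr σT = Tr(λρ - σ)T ≤ F λ`, with
equality for the projection onto the positive eigenspace of `λρ - σ` (the Neyman–Pearson test).
This gives weak duality and makes `F` 1-Lipschitz, so the dual objective `(1 - ε)λ - F λ`,
which is negative for `λ < 0` and for `λ > 1/ε`, attains its maximum at some `λ₀ ≥ 0`.
Comparing with `λ₀ ± δ`, the Neyman–Pearson tests at `λ₀ - δ` and `λ₀ + δ` accept `ρ` with
probability at most, resp. at least, `1 - ε`; the convex combination meeting the constraint
with equality has type II error within `2δ` of the dual optimum. The trace-norm form is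
`Tr X₊ = (Tr X + ‖X‖₁) / 2`.
-/

open scoped ComplexOrder Matrix

noncomputable section

/-- Power of a positive semidefinite matrix computed on its support
(`0^t := 0` for zero eigenvalues). -/
def Matrix.PosSemidef.rpow {d : ℕ} {A : Matrix (Fin d) (Fin d) ℂ}
    (hA : A.PosSemidef) (t : ℝ) : Matrix (Fin d) (Fin d) ℂ :=
  (hA.1.eigenvectorUnitary : Matrix (Fin d) (Fin d) ℂ) *
    Matrix.diagonal (fun i =>
      ((if hA.1.eigenvalues i = 0 then (0:ℝ) else hA.1.eigenvalues i ^ t) : ℂ)) *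
    (hA.1.eigenvectorUnitary : Matrix (Fin d) (Fin d) ℂ)ᴴ

/-- The positive semidefinite square root (the definition Mathlib had in December 2024). -/
def Matrix.PosSemidef.sqrt {n : Type*} [Fintype n] [DecidableEq n] {A : Matrix n n ℂ}
    (hA : A.PosSemidef) : Matrix n n ℂ :=
  (hA.1.eigenvectorUnitary : Matrix n n ℂ) *
    Matrix.diagonal (fun i => ((Real.sqrt (hA.1.eigenvalues i) : ℝ) : ℂ)) *
    (star hA.1.eigenvectorUnitary : Matrix n n ℂ)

/-- The trace norm `‖X‖₁ = Tr √(XᴴX)`. -/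
def Matrix.traceNorm {d : ℕ} (X : Matrix (Fin d) (Fin d) ℂ) : ℝ :=
  ((Matrix.posSemidef_conjTranspose_mul_self X).sqrt.trace).re

/-- The `n`-fold tensor power of a matrix, realized on the index set `Fin n → Fin d`. -/
def Matrix.tensorPow {d : ℕ} (A : Matrix (Fin d) (Fin d) ℂ) (n : ℕ) :
    Matrix (Fin n → Fin d) (Fin n → Fin d) ℂ :=
  Matrix.of fun x y => ∏ i, A (x i) (y i)

/-- Spectral projection of a Hermitian matrix onto the strictly positive part of its
spectrum. -/
def Matrix.IsHermitian.projPos {d : ℕ} {A : Matrix (Fin d) (Fin d) ℂ}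
    (hA : A.IsHermitian) : Matrix (Fin d) (Fin d) ℂ :=
  (hA.eigenvectorUnitary : Matrix (Fin d) (Fin d) ℂ) *
    Matrix.diagonal (fun i => ((if 0 < hA.eigenvalues i then (1:ℝ) else 0) : ℂ)) *
    (hA.eigenvectorUnitary : Matrix (Fin d) (Fin d) ℂ)ᴴ

/-- Spectral projection of a Hermitian matrix onto the nonnegative part of its spectrum. -/
def Matrix.IsHermitian.projNonneg {d : ℕ} {A : Matrix (Fin d) (Fin d) ℂ}
    (hA : A.IsHermitian) : Matrix (Fin d) (Fin d) ℂ :=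
  (hA.eigenvectorUnitary : Matrix (Fin d) (Fin d) ℂ) *
    Matrix.diagonal (fun i => ((if 0 ≤ hA.eigenvalues i then (1:ℝ) else 0) : ℂ)) *
    (hA.eigenvectorUnitary : Matrix (Fin d) (Fin d) ℂ)ᴴ

/-- The positive part `(X)_+ = ½(X + |X|)` of a matrix, with `|X| = √(XᴴX)`. -/
def Matrix.posPart' {d : ℕ} (X : Matrix (Fin d) (Fin d) ℂ) : Matrix (Fin d) (Fin d) ℂ :=
  (2:ℂ)⁻¹ • (X + (Matrix.posSemidef_conjTranspose_mul_self X).sqrt)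

/-- The matrix logarithm on the support (`log* 0 := 0`). -/
def Matrix.PosSemidef.logStar {d : ℕ} {A : Matrix (Fin d) (Fin d) ℂ}
    (hA : A.PosSemidef) : Matrix (Fin d) (Fin d) ℂ :=
  (hA.1.eigenvectorUnitary : Matrix (Fin d) (Fin d) ℂ) *
    Matrix.diagonal (fun i =>
      ((if hA.1.eigenvalues i = 0 then (0:ℝ) else Real.log (hA.1.eigenvalues i)) : ℂ)) *
    (hA.1.eigenvectorUnitary : Matrix (Fin d) (Fin d) ℂ)ᴴ

end

open scoped MatrixOrder

namespace Matrix

section Tests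

variable {n 𝕜 : Type*} [Fintype n] [DecidableEq n] [RCLike 𝕜]

lemma trace_mul_nonneg {A B : Matrix n n 𝕜} (hA : 0 ≤ A) (hB : 0 ≤ B) :
    0 ≤ (A * B).trace := by
  obtain ⟨C, rfl⟩ := CStarAlgebra.nonneg_iff_eq_star_mul_self.mp hA
  rw [mul_assoc, trace_mul_comm, mul_assoc, ← mul_assoc]
  exact ((nonneg_iff_posSemidef.mp hB).mul_mul_conjTranspose_same C).trace_nonneg

lemma trace_mul_le_trace_posPart {X T : Matrix n n 𝕜} (hX : IsSelfAdjoint X)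
    (hT : T ∈ Set.Icc 0 1) : (X * T).trace ≤ X⁺.trace := by
  have hpos : 0 ≤ (X⁺ * (1 - T)).trace :=
    trace_mul_nonneg (CFC.posPart_nonneg X) (sub_nonneg.mpr hT.2)
  have hneg : 0 ≤ (X⁻ * T).trace := trace_mul_nonneg (CFC.negPart_nonneg X) hT.1
  rw [mul_sub, mul_one, trace_sub] at hpos
  nth_rw 1 [← CFC.posPart_sub_negPart X]
  rw [sub_mul, trace_sub]
  linear_combination hpos + hneg

lemma exists_mem_Icc_mul_eq_posPart {X : Matrix n n 𝕜} (hX : IsSelfAdjoint X) :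
    ∃ T ∈ Set.Icc (0 : Matrix n n 𝕜) 1, X * T = X⁺ := by
  set f : ℝ → ℝ := (Set.Ioi 0).indicator 1
  have hf (t : ℝ) : f t ∈ Set.Icc 0 1 := by
    by_cases ht : 0 < t <;> simp [f, ht]
  refine ⟨cfc f X, ⟨cfc_nonneg fun t _ => (hf t).1, cfc_le_one _ _ fun t _ => (hf t).2⟩, ?_⟩
  have hcont (g : ℝ → ℝ) : ContinuousOn g (spectrum ℝ X) := X.finite_real_spectrum.continuousOn g
  conv_lhs => enter [1]; rw [← cfc_id' ℝ X]
  rw [← cfc_mul _ _ X (hcont _) (hcont _), CFC.posPart_def, cfcₙ_eq_cfc]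
  refine cfc_congr fun t _ => ?_
  by_cases ht : 0 < t
  · simp [f, ht, ht.le]
  · simp [f, ht, le_of_not_gt ht]

end Tests

section TracePosPart

variable {n : Type*} [Fintype n] [DecidableEq n] {ρ σ : Matrix n n ℂ}

noncomputable def tracePosPart (ρ σ : Matrix n n ℂ) (lam : ℝ) : ℝ :=
  ((((lam : ℂ) • ρ - σ)⁺).trace).re

omit [Fintype n] [DecidableEq n] in
lemma isSelfAdjoint_ofReal_smul_sub (hρ : IsSelfAdjoint ρ) (hσ : IsSelfAdjoint σ) (lam : ℝ) :
    IsSelfAdjoint ((lam : ℂ) • ρ - σ) :=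
  (IsSelfAdjoint.smul (Complex.conj_ofReal lam) hρ).sub hσ

lemma re_trace_ofReal_smul_sub_mul (lam : ℝ) (T : Matrix n n ℂ) :
    ((((lam : ℂ) • ρ - σ) * T).trace).re = lam * (ρ * T).trace.re - (σ * T).trace.re := by
  simp [sub_mul, trace_sub]

lemma re_trace_mul_smul_add_smul (A T₁ T₂ : Matrix n n ℂ) (p q : ℝ) :
    ((A * (p • T₁ + q • T₂)).trace).re = p * (A * T₁).trace.re + q * (A * T₂).trace.re := by
  simp [mul_add, trace_add]

lemma tracePosPart_nonneg (lam : ℝ) : 0 ≤ tracePosPart ρ σ lam :=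
  Complex.re_le_re (nonneg_iff_posSemidef.mp (CFC.posPart_nonneg _)).trace_nonneg

lemma tracePosPart_zero (hσ : 0 ≤ σ) : tracePosPart ρ σ 0 = 0 := by
  rw [tracePosPart, Complex.ofReal_zero, zero_smul, zero_sub, CFC.posPart_neg,
    (CFC.negPart_eq_zero_iff σ).mpr hσ, trace_zero, Complex.zero_re]

lemma le_tracePosPart_of_mem_Icc (hρ : IsSelfAdjoint ρ) (hσ : IsSelfAdjoint σ)
    {T : Matrix n n ℂ} (hT : T ∈ Set.Icc 0 1) (lam : ℝ) :
    lam * (ρ * T).trace.re - (σ * T).trace.re ≤ tracePosPart ρ σ lam := by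
  rw [← re_trace_ofReal_smul_sub_mul]
  exact Complex.re_le_re
    (trace_mul_le_trace_posPart (isSelfAdjoint_ofReal_smul_sub hρ hσ lam) hT)

lemma exists_mem_Icc_eq_tracePosPart (hρ : IsSelfAdjoint ρ) (hσ : IsSelfAdjoint σ) (lam : ℝ) :
    ∃ T ∈ Set.Icc 0 1, lam * (ρ * T).trace.re - (σ * T).trace.re = tracePosPart ρ σ lam := by
  obtain ⟨T, hT, hXT⟩ :=
    exists_mem_Icc_mul_eq_posPart (isSelfAdjoint_ofReal_smul_sub hρ hσ lam)
  exact ⟨T, hT, by rw [← re_trace_ofReal_smul_sub_mul, hXT, tracePosPart]⟩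

lemma re_trace_mul_mem_Icc (hρ : 0 ≤ ρ) (hρ1 : ρ.trace = 1) {T : Matrix n n ℂ}
    (hT : T ∈ Set.Icc 0 1) : (ρ * T).trace.re ∈ Set.Icc 0 1 := by
  have h1 := Complex.re_le_re (trace_mul_nonneg hρ (sub_nonneg.mpr hT.2))
  rw [mul_sub, mul_one, trace_sub, hρ1] at h1
  exact ⟨Complex.re_le_re (trace_mul_nonneg hρ hT.1), by simpa using h1⟩

lemma lipschitzWith_tracePosPart (hρ : 0 ≤ ρ) (hρ1 : ρ.trace = 1) (hσ : IsSelfAdjoint σ) :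
    LipschitzWith 1 (tracePosPart ρ σ) := by
  refine LipschitzWith.of_le_add fun x y => ?_
  obtain ⟨T, hT, hxT⟩ := exists_mem_Icc_eq_tracePosPart hρ.isSelfAdjoint hσ x
  have hyT := le_tracePosPart_of_mem_Icc hρ.isSelfAdjoint hσ hT y
  have ht := re_trace_mul_mem_Icc hρ hρ1 hT
  rw [Real.dist_eq]
  nlinarith [le_abs_self (x - y), neg_abs_le (x - y), ht.1, ht.2]

lemma sub_one_le_tracePosPart (hρ : IsSelfAdjoint ρ) (hσ : IsSelfAdjoint σ)
    (hρ1 : ρ.trace = 1) (hσ1 : σ.trace = 1) (lam : ℝ) : lam - 1 ≤ tracePosPart ρ σ lam := by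
  simpa [hρ1, hσ1] using le_tracePosPart_of_mem_Icc hρ hσ ⟨zero_le_one, le_rfl⟩ lam

end TracePosPart

section Duality

variable {n : Type*} [Fintype n] [DecidableEq n] {ρ σ : Matrix n n ℂ} {ε : ℝ}

lemma dual_le_re_trace_mul (hρ : IsSelfAdjoint ρ) (hσ : IsSelfAdjoint σ) {T : Matrix n n ℂ}
    (hT : T ∈ Set.Icc 0 1) (hfeas : 1 - ε ≤ (ρ * T).trace.re) {lam : ℝ} (hlam : 0 ≤ lam) :
    (1 - ε) * lam - tracePosPart ρ σ lam ≤ (σ * T).trace.re := by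
  nlinarith [le_tracePosPart_of_mem_Icc hρ hσ hT lam]

lemma exists_forall_dual_le (hρ : 0 ≤ ρ) (hσ : 0 ≤ σ) (hρ1 : ρ.trace = 1) (hσ1 : σ.trace = 1)
    (hε : ε ∈ Set.Ioo 0 1) :
    ∃ lam₀, 0 ≤ lam₀ ∧ ∀ lam, (1 - ε) * lam - tracePosPart ρ σ lam ≤
      (1 - ε) * lam₀ - tracePosPart ρ σ lam₀ := by
  obtain ⟨hε0, hε1⟩ := hε
  have hcont : Continuous fun lam => (1 - ε) * lam - tracePosPart ρ σ lam :=
    (continuous_const.mul continuous_id).sub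
      (lipschitzWith_tracePosPart hρ hρ1 hσ.isSelfAdjoint).continuous
  obtain ⟨lam₀, ⟨hlam₀, -⟩, hmax⟩ := (isCompact_Icc (a := 0) (b := 1 / ε)).exists_isMaxOn
    ⟨0, le_rfl, by positivity⟩ hcont.continuousOn
  refine ⟨lam₀, hlam₀, fun lam => ?_⟩
  have h0 : (1 - ε) * 0 - tracePosPart ρ σ 0 ≤ (1 - ε) * lam₀ - tracePosPart ρ σ lam₀ :=
    hmax ⟨le_rfl, by positivity⟩
  rw [tracePosPart_zero hσ, mul_zero, sub_zero] at h0
  by_cases hlam : lam ∈ Set.Icc 0 (1 / ε)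
  · exact hmax hlam
  · rcases not_and_or.mp hlam with hlam | hlam
    · nlinarith [tracePosPart_nonneg (ρ := ρ) (σ := σ) lam]
    · have := sub_one_le_tracePosPart hρ.isSelfAdjoint hσ.isSelfAdjoint hρ1 hσ1 lam
      rw [not_le, div_lt_iff₀ hε0] at hlam
      nlinarith

lemma re_trace_mul_le_of_eq_tracePosPart (hρ : 0 ≤ ρ) (hρ1 : ρ.trace = 1)
    (hσ : IsSelfAdjoint σ) {T : Matrix n n ℂ} (hT : T ∈ Set.Icc 0 1) {μ lam δ : ℝ}
    (hopt : μ * (ρ * T).trace.re - (σ * T).trace.re = tracePosPart ρ σ μ)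
    (hμ : |μ - lam| ≤ δ) :
    (σ * T).trace.re ≤ lam * (ρ * T).trace.re - tracePosPart ρ σ lam + 2 * δ := by
  have hlip := (lipschitzWith_tracePosPart hρ hρ1 hσ).dist_le_mul μ lam
  rw [NNReal.coe_one, one_mul, Real.dist_eq] at hlip
  have ht := re_trace_mul_mem_Icc hρ hρ1 hT
  nlinarith [abs_le.mp hμ, abs_le.mp (hlip.trans hμ), ht.1, ht.2]

lemma exists_mem_Icc_re_trace_mul_le (hρ : 0 ≤ ρ) (hρ1 : ρ.trace = 1) (hσ : IsSelfAdjoint σ)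
    {lam₀ : ℝ} (hmax : ∀ lam, (1 - ε) * lam - tracePosPart ρ σ lam ≤
      (1 - ε) * lam₀ - tracePosPart ρ σ lam₀) {δ : ℝ} (hδ : 0 < δ) :
    ∃ T ∈ Set.Icc 0 1, (ρ * T).trace.re = 1 - ε ∧
      (σ * T).trace.re ≤ (1 - ε) * lam₀ - tracePosPart ρ σ lam₀ + 2 * δ := by
  obtain ⟨T₁, hT₁, hopt₁⟩ := exists_mem_Icc_eq_tracePosPart hρ.isSelfAdjoint hσ (lam₀ - δ)
  obtain ⟨T₂, hT₂, hopt₂⟩ := exists_mem_Icc_eq_tracePosPart hρ.isSelfAdjoint hσ (lam₀ + δ)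
  have hsupp₁ := le_tracePosPart_of_mem_Icc hρ.isSelfAdjoint hσ hT₁ lam₀
  have hsupp₂ := le_tracePosPart_of_mem_Icc hρ.isSelfAdjoint hσ hT₂ lam₀
  have hb : (ρ * T₁).trace.re ≤ 1 - ε := by nlinarith [hmax (lam₀ - δ)]
  have ha : 1 - ε ≤ (ρ * T₂).trace.re := by nlinarith [hmax (lam₀ + δ)]
  obtain ⟨p, q, hp, hq, hpq, hmix⟩ := Icc_subset_segment (𝕜 := ℝ) ⟨hb, ha⟩
  simp only [smul_eq_mul] at hmix
  have hval₁ := re_trace_mul_le_of_eq_tracePosPart hρ hρ1 hσ hT₁ hopt₁ (lam := lam₀) (δ := δ)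
    (by simp [abs_of_pos hδ])
  have hval₂ := re_trace_mul_le_of_eq_tracePosPart hρ hρ1 hσ hT₂ hopt₂ (lam := lam₀) (δ := δ)
    (by simp [abs_of_pos hδ])
  refine ⟨p • T₁ + q • T₂, convex_Icc 0 1 hT₁ hT₂ hp hq hpq, ?_, ?_⟩
  · rw [re_trace_mul_smul_add_smul, hmix]
  · rw [re_trace_mul_smul_add_smul]
    calc p * (σ * T₁).trace.re + q * (σ * T₂).trace.re
        ≤ p * (lam₀ * (ρ * T₁).trace.re - tracePosPart ρ σ lam₀ + 2 * δ) +
          q * (lam₀ * (ρ * T₂).trace.re - tracePosPart ρ σ lam₀ + 2 * δ) := by gcongr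
      _ = lam₀ * (p * (ρ * T₁).trace.re + q * (ρ * T₂).trace.re) -
          (p + q) * (tracePosPart ρ σ lam₀ - 2 * δ) := by ring
      _ = _ := by rw [hmix, hpq]; ring

lemma isGLB_typeIIError (hρ : 0 ≤ ρ) (hρ1 : ρ.trace = 1) (hσ : IsSelfAdjoint σ)
    {lam₀ : ℝ} (hlam₀ : 0 ≤ lam₀) (hmax : ∀ lam, (1 - ε) * lam - tracePosPart ρ σ lam ≤
      (1 - ε) * lam₀ - tracePosPart ρ σ lam₀) :
    IsGLB {y : ℝ | ∃ T : Matrix n n ℂ, T.PosSemidef ∧ (1 - T).PosSemidef ∧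
        ((ρ * (1 - T)).trace).re ≤ ε ∧ y = ((σ * T).trace).re}
      ((1 - ε) * lam₀ - tracePosPart ρ σ lam₀) := by
  have hfeas (T : Matrix n n ℂ) : ((ρ * (1 - T)).trace).re ≤ ε ↔ 1 - ε ≤ (ρ * T).trace.re := by
    rw [mul_sub, mul_one, trace_sub, hρ1, Complex.sub_re, Complex.one_re]
    constructor <;> intro h <;> linarith
  refine ⟨?_, fun b hb => le_of_forall_pos_le_add fun η hη => ?_⟩
  · rintro _ ⟨T, hT₀, hT₁, hT, rfl⟩
    exact dual_le_re_trace_mul hρ.isSelfAdjoint hσ ⟨hT₀.nonneg, le_iff.mpr hT₁⟩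
      ((hfeas T).mp hT) hlam₀
  · obtain ⟨T, hT, hρT, hσT⟩ := exists_mem_Icc_re_trace_mul_le hρ hρ1 hσ hmax (half_pos hη)
    have := hb ⟨T, nonneg_iff_posSemidef.mp hT.1, le_iff.mp hT.2, (hfeas T).mpr hρT.ge, rfl⟩
    linarith

end Duality

lemma PosSemidef.sqrt_eq_cfcSqrt {n : Type*} [Fintype n] [DecidableEq n] {A : Matrix n n ℂ}
    (hA : A.PosSemidef) : hA.sqrt = CFC.sqrt A := by
  rw [CFC.sqrt_eq_real_sqrt A hA.nonneg, cfcₙ_eq_cfc, hA.1.cfc_eq, IsHermitian.cfc,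
    Unitary.conjStarAlgAut_apply]
  rfl

lemma posPart'_eq_posPart {d : ℕ} {X : Matrix (Fin d) (Fin d) ℂ} (hX : IsSelfAdjoint X) :
    X.posPart' = X⁺ := by
  rw [posPart', PosSemidef.sqrt_eq_cfcSqrt, ← star_eq_conjTranspose, ← CFC.abs, add_comm,
    CFC.abs_add_self X, two_smul, ← two_smul ℂ, smul_smul, inv_mul_cancel₀ two_ne_zero, one_smul]

lemma re_trace_posPart' {d : ℕ} (X : Matrix (Fin d) (Fin d) ℂ) :
    X.posPart'.trace.re = (X.trace.re + X.traceNorm) / 2 := by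
  rw [posPart', traceNorm, trace_smul, trace_add, smul_eq_mul, ← Complex.ofReal_ofNat,
    ← Complex.ofReal_inv, Complex.re_ofReal_mul, Complex.add_re]
  ring

section Density

variable {d : ℕ} {ρ σ : Matrix (Fin d) (Fin d) ℂ}

lemma re_trace_posPart'_ofReal_smul_sub (hρ : IsSelfAdjoint ρ) (hσ : IsSelfAdjoint σ)
    (lam : ℝ) : ((posPart' ((lam : ℂ) • ρ - σ)).trace).re = tracePosPart ρ σ lam := by
  rw [posPart'_eq_posPart (isSelfAdjoint_ofReal_smul_sub hρ hσ lam), tracePosPart]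

lemma tracePosPart_eq_traceNorm (hρ : IsSelfAdjoint ρ) (hσ : IsSelfAdjoint σ)
    (hρ1 : ρ.trace = 1) (hσ1 : σ.trace = 1) (lam : ℝ) :
    tracePosPart ρ σ lam = (lam - 1 + traceNorm ((lam : ℂ) • ρ - σ)) / 2 := by
  rw [← re_trace_posPart'_ofReal_smul_sub hρ hσ, re_trace_posPart', trace_sub, trace_smul,
    hρ1, hσ1]
  simp

end Density

end Matrix

/-- Strong LP duality for the optimal type II error: for density matrices `ρ, σ` and
`ε ∈ (0,1)`, `β_ε = sup_{λ≥0} {(1-ε)λ - Tr(λρ - σ)₊} = sup_{λ≥0} {(λ+1)/2 - ½‖λρ-σ‖₁ - λε}`. -/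
theorem stmt_14 {d : ℕ} {ρ σ : Matrix (Fin d) (Fin d) ℂ}
    (hρ : ρ.PosSemidef) (hσ : σ.PosSemidef) (hρ1 : ρ.trace = 1) (hσ1 : σ.trace = 1)
    (ε : ℝ) (hε : ε ∈ Set.Ioo (0:ℝ) 1) :
    sInf {y : ℝ | ∃ T : Matrix (Fin d) (Fin d) ℂ,
        T.PosSemidef ∧ (1 - T).PosSemidef ∧ ((ρ * (1 - T)).trace).re ≤ ε ∧
        y = ((σ * T).trace).re}
      = sSup {y : ℝ | ∃ lam : ℝ, 0 ≤ lam ∧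
          y = (1 - ε) * lam - ((Matrix.posPart' ((lam:ℂ) • ρ - σ)).trace).re} ∧
    sInf {y : ℝ | ∃ T : Matrix (Fin d) (Fin d) ℂ,
        T.PosSemidef ∧ (1 - T).PosSemidef ∧ ((ρ * (1 - T)).trace).re ≤ ε ∧
        y = ((σ * T).trace).re}
      = sSup {y : ℝ | ∃ lam : ℝ, 0 ≤ lam ∧
          y = (lam + 1) / 2 - (1/2) * Matrix.traceNorm ((lam:ℂ) • ρ - σ) - lam * ε} := by
  have htracePosPart (lam : ℝ) :
      ((Matrix.posPart' ((lam : ℂ) • ρ - σ)).trace).re = Matrix.tracePosPart ρ σ lam :=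
    Matrix.re_trace_posPart'_ofReal_smul_sub hρ.1 hσ.1 lam
  have htraceNorm (lam : ℝ) :
      (lam + 1) / 2 - (1 / 2) * Matrix.traceNorm ((lam : ℂ) • ρ - σ) - lam * ε =
        (1 - ε) * lam - Matrix.tracePosPart ρ σ lam := by
    rw [Matrix.tracePosPart_eq_traceNorm hρ.1 hσ.1 hρ1 hσ1]
    ring
  obtain ⟨lam₀, hlam₀, hmax⟩ := Matrix.exists_forall_dual_le hρ.nonneg hσ.nonneg hρ1 hσ1 hε
  have hβ := Matrix.isGLB_typeIIError hρ.nonneg hρ1 hσ.1 hlam₀ hmax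
  rw [hβ.csInf_eq ⟨1, 1, Matrix.PosSemidef.one, by simpa using Matrix.PosSemidef.zero,
    by simpa using hε.1.le, by simp [hσ1]⟩]
  simp only [htracePosPart, htraceNorm, and_self]
  refine Eq.symm (IsGreatest.csSup_eq ⟨⟨lam₀, hlam₀, rfl⟩, ?_⟩)
  rintro _ ⟨lam, -, rfl⟩
  exact hmax lam
end

section
/- For 0 ≤ z ≤ 1 and fixed n > 0, the function x ↦ I_z(n−x, x) is monotone increasing in x for 0 ≤ x ≤ n, where I_z(a,b) = B(z,a,b)/B(a,b) is the regularised incomplete beta function with B(z,a,b) = ∫₀^z t^{a−1}(1−t)^{b−1} dt and B(a,b) = B(1,a,b). -/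
/-!
Write `f_x(t) = t ^ (n - x - 1) * (1 - t) ^ (x - 1)` and `F_x(c, d) = ∫_c^d f_x`. For `x ≤ y` the
likelihood ratio `f_y / f_x = ((1 - t) / t) ^ (y - x)` is decreasing on `(0, 1)`, so
`f_x(t) f_y(u) ≤ f_y(t) f_x(u)` whenever `t ≤ u`. Integrating over `t ∈ (0, z)`, `u ∈ (z, 1)` gives
`F_x(0, z) F_y(z, 1) ≤ F_y(0, z) F_x(z, 1)`; adding `F_x(0, z) F_y(0, z)` to both sides yields
`F_x(0, z) F_y(0, 1) ≤ F_y(0, z) F_x(0, 1)`.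
-/

open MeasureTheory Set

section RatioOrder

variable {f g : ℝ → ℝ} {a z b : ℝ}

theorem integral_mul_integral_le_of_cross_le (haz : a ≤ z) (hzb : z ≤ b)
    (hf₁ : IntervalIntegrable f volume a z) (hg₁ : IntervalIntegrable g volume a z)
    (hf₂ : IntervalIntegrable f volume z b) (hg₂ : IntervalIntegrable g volume z b)
    (h : ∀ t ∈ Ioo a z, ∀ u ∈ Ioo z b, f t * g u ≤ g t * f u) :
    (∫ t in a..z, f t) * (∫ u in z..b, g u) ≤ (∫ t in a..z, g t) * ∫ u in z..b, f u := by
  rw [← intervalIntegral.integral_const_mul, ← intervalIntegral.integral_const_mul]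
  refine intervalIntegral.integral_mono_on_of_le_Ioo hzb (hg₂.const_mul _) (hf₂.const_mul _)
    fun u hu => ?_
  rw [← intervalIntegral.integral_mul_const, ← intervalIntegral.integral_mul_const]
  exact intervalIntegral.integral_mono_on_of_le_Ioo haz (hf₁.mul_const _) (hg₁.mul_const _)
    fun t ht => h t ht u hu

theorem integral_div_integral_le_of_cross_le (haz : a ≤ z) (hzb : z ≤ b)
    (hf : IntervalIntegrable f volume a b) (hg : IntervalIntegrable g volume a b)
    (hf_pos : 0 < ∫ t in a..b, f t) (hg_pos : 0 < ∫ t in a..b, g t)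
    (h : ∀ t ∈ Ioo a b, ∀ u ∈ Ioo a b, t ≤ u → f t * g u ≤ g t * f u) :
    (∫ t in a..z, f t) / (∫ t in a..b, f t) ≤ (∫ t in a..z, g t) / ∫ t in a..b, g t := by
  have hsub₁ : uIcc a z ⊆ uIcc a b := uIcc_subset_uIcc_left (mem_uIcc_of_le haz hzb)
  have hsub₂ : uIcc z b ⊆ uIcc a b := uIcc_subset_uIcc_right (mem_uIcc_of_le haz hzb)
  have hcross := integral_mul_integral_le_of_cross_le haz hzb (hf.mono_set hsub₁)
    (hg.mono_set hsub₁) (hf.mono_set hsub₂) (hg.mono_set hsub₂) fun t ht u hu =>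
      h t ⟨ht.1, ht.2.trans_le hzb⟩ u ⟨haz.trans_lt hu.1, hu.2⟩ (ht.2.trans hu.1).le
  rw [div_le_div_iff₀ hf_pos hg_pos,
    ← intervalIntegral.integral_add_adjacent_intervals (hf.mono_set hsub₁) (hf.mono_set hsub₂),
    ← intervalIntegral.integral_add_adjacent_intervals (hg.mono_set hsub₁) (hg.mono_set hsub₂)]
  linarith

end RatioOrder

section BetaKernel

variable {a b : ℝ}

theorem intervalIntegrable_rpow_mul_one_sub_rpow_zero_half (ha : 0 < a) :
    IntervalIntegrable (fun t : ℝ => t ^ (a - 1) * (1 - t) ^ (b - 1)) volume 0 (1 / 2) := by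
  refine (intervalIntegral.intervalIntegrable_rpow' (by linarith)).mul_continuousOn ?_
  refine continuousOn_of_forall_continuousAt fun t ht => ?_
  rw [uIcc_of_le (by norm_num)] at ht
  exact ContinuousAt.rpow_const (f := fun t => 1 - t) (by fun_prop) (Or.inl (by linarith [ht.2]))

theorem intervalIntegrable_rpow_mul_one_sub_rpow (ha : 0 < a) (hb : 0 < b) :
    IntervalIntegrable (fun t : ℝ => t ^ (a - 1) * (1 - t) ^ (b - 1)) volume 0 1 := by
  refine (intervalIntegrable_rpow_mul_one_sub_rpow_zero_half ha).trans ?_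
  have := (intervalIntegrable_rpow_mul_one_sub_rpow_zero_half (b := a) hb).comp_sub_left 1
  norm_num at this
  simpa only [mul_comm] using this.symm

theorem integral_rpow_mul_one_sub_rpow_pos (ha : 0 < a) (hb : 0 < b) :
    0 < ∫ t in (0 : ℝ)..1, t ^ (a - 1) * (1 - t) ^ (b - 1) :=
  intervalIntegral.intervalIntegral_pos_of_pos_on
    (intervalIntegrable_rpow_mul_one_sub_rpow ha hb)
    (fun _ ht => mul_pos (Real.rpow_pos_of_pos ht.1 _) (Real.rpow_pos_of_pos (sub_pos.2 ht.2) _))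
    one_pos

theorem rpow_mul_one_sub_rpow_cross_le {n x y t u : ℝ} (hxy : x ≤ y) (ht : 0 < t) (htu : t ≤ u)
    (hu : u < 1) :
    t ^ (n - x - 1) * (1 - t) ^ (x - 1) * (u ^ (n - y - 1) * (1 - u) ^ (y - 1)) ≤
      t ^ (n - y - 1) * (1 - t) ^ (y - 1) * (u ^ (n - x - 1) * (1 - u) ^ (x - 1)) := by
  have hlr : ∀ s : ℝ, 0 < s → s < 1 → s ^ (n - y - 1) * (1 - s) ^ (y - 1) =
      s ^ (n - x - 1) * (1 - s) ^ (x - 1) * ((1 - s) / s) ^ (y - x) := fun s hs hs1 => by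
    have hs1' : 0 < 1 - s := by linarith
    rw [Real.div_rpow hs1'.le hs.le, show n - y - 1 = n - x - 1 + -(y - x) by ring,
      show y - 1 = x - 1 + (y - x) by ring, Real.rpow_add hs, Real.rpow_add hs1',
      Real.rpow_neg hs.le]
    field_simp
  have hu0 : 0 < u := ht.trans_le htu
  have hratio : ((1 - u) / u) ^ (y - x) ≤ ((1 - t) / t) ^ (y - x) := by
    refine Real.rpow_le_rpow (div_nonneg (by linarith) hu0.le) ?_ (by linarith)
    rw [div_le_div_iff₀ hu0 ht]
    nlinarith
  rw [hlr t ht (htu.trans_lt hu), hlr u hu0 hu]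
  have hft : 0 ≤ t ^ (n - x - 1) * (1 - t) ^ (x - 1) := by have := htu.trans_lt hu; positivity
  have hfu : 0 ≤ u ^ (n - x - 1) * (1 - u) ^ (x - 1) := by positivity
  calc _ = t ^ (n - x - 1) * (1 - t) ^ (x - 1) * (u ^ (n - x - 1) * (1 - u) ^ (x - 1)) *
          ((1 - u) / u) ^ (y - x) := by ring
    _ ≤ t ^ (n - x - 1) * (1 - t) ^ (x - 1) * (u ^ (n - x - 1) * (1 - u) ^ (x - 1)) *
          ((1 - t) / t) ^ (y - x) := by gcongr
    _ = _ := by ring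

end BetaKernel

theorem stmt_18_general (z : ℝ) (hz : z ∈ Set.Icc (0:ℝ) 1) (n : ℝ) :
    MonotoneOn (fun x : ℝ =>
      (∫ t in (0:ℝ)..z, t ^ (n - x - 1) * (1 - t) ^ (x - 1)) /
        (∫ t in (0:ℝ)..1, t ^ (n - x - 1) * (1 - t) ^ (x - 1)))
      (Set.Ioo 0 n) := by
  intro x ⟨hx0, hxn⟩ y ⟨hy0, hyn⟩ hxy
  exact integral_div_integral_le_of_cross_le hz.1 hz.2
    (intervalIntegrable_rpow_mul_one_sub_rpow (sub_pos.2 hxn) hx0)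
    (intervalIntegrable_rpow_mul_one_sub_rpow (sub_pos.2 hyn) hy0)
    (integral_rpow_mul_one_sub_rpow_pos (sub_pos.2 hxn) hx0)
    (integral_rpow_mul_one_sub_rpow_pos (sub_pos.2 hyn) hy0)
    fun t ht u hu htu => rpow_mul_one_sub_rpow_cross_le hxy ht.1 htu hu.2

/-- For `0 ≤ z ≤ 1` and `n > 0`, the regularised incomplete beta function
`x ↦ I_z(n-x, x) = B(z, n-x, x)/B(n-x, x)` is monotone increasing in the real variable
`x ∈ (0, n)`. -/
theorem stmt_18 (z : ℝ) (hz : z ∈ Set.Icc (0:ℝ) 1) (n : ℝ) (hn : 0 < n) :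
    MonotoneOn (fun x : ℝ =>
      (∫ t in (0:ℝ)..z, t ^ (n - x - 1) * (1 - t) ^ (x - 1)) /
        (∫ t in (0:ℝ)..1, t ^ (n - x - 1) * (1 - t) ^ (x - 1)))
      (Set.Ioo 0 n) :=
  stmt_18_general z hz n
end
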